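/- Let A and B be finite-dimensional k-algebras and M an A-B-bimodule for which there exists a surjection of left A-modules A^{⊕n} ↠ M for some natural number n. If X is a right A-module (not necessarily finite-dimensional) of finite endolength, then the right B-module X ⊗_A M has finite endolength, and its endolength is at most n times the endolength of X. -/

import Mathlib

/-!
Since `End_A(X)` acts on `X ⊗_A M` by `B`-linear maps, every `End_B(X ⊗_A M)`-submodule of
`X ⊗_A M` is an `End_A(X)`-submodule, so the endolength of `X ⊗_A M` is at most its length over
`End_A(X)`. The `End_A(X)`-linear map `Xⁿ → X ⊗_A M`, `v ↦ ∑ vᵢ ⊗ f(eᵢ)`, is onto because `f` is,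
so that length is at most the length of `Xⁿ` over `End_A(X)`, which is `n` times the endolength
of `X`.
-/

set_option linter.unusedSectionVars false

open scoped TensorProduct
open MulOpposite

universe u

namespace JJ

noncomputable section

section BalTensor

variable (B : Type u) [Ring B] (M : Type u) [AddCommGroup M] [Module Bᵐᵒᵖ M]
  (N : Type u) [AddCommGroup N] [Module B N]

/-- The subgroup of relations defining the balanced tensor product `M ⊗_B N`. -/
def balRel : Submodule ℤ (TensorProduct ℤ M N) :=
  Submodule.span ℤ { z | ∃ (b : B) (m : M) (n : N),
    z = (op b • m) ⊗ₜ[ℤ] n - m ⊗ₜ[ℤ] (b • n) }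

/-- The balanced tensor product `M ⊗_B N` of a right `B`-module `M` and a left `B`-module `N`. -/
def BalTensor : Type u := TensorProduct ℤ M N ⧸ balRel B M N

instance : AddCommGroup (BalTensor B M N) :=
  inferInstanceAs (AddCommGroup (TensorProduct ℤ M N ⧸ balRel B M N))

/-- The canonical projection onto the balanced tensor product. -/
def BalTensor.mk : TensorProduct ℤ M N →+ BalTensor B M N :=
  (balRel B M N).mkQ.toAddMonoidHom

/-- The image of a pure tensor in the balanced tensor product. -/
def BalTensor.tmul (m : M) (n : N) : BalTensor B M N := BalTensor.mk B M N (m ⊗ₜ n)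

lemma BalTensor.mk_surjective : Function.Surjective (BalTensor.mk B M N) :=
  Submodule.mkQ_surjective _

lemma BalTensor.balance (b : B) (m : M) (n : N) :
    BalTensor.tmul B M N (op b • m) n = BalTensor.tmul B M N m (b • n) := by
  have h : ((op b • m) ⊗ₜ[ℤ] n - m ⊗ₜ[ℤ] (b • n)) ∈ balRel B M N :=
    Submodule.subset_span ⟨b, m, n, rfl⟩
  have h2 := (Submodule.Quotient.mk_eq_zero (balRel B M N)).2 h
  rw [Submodule.Quotient.mk_sub] at h2
  exact sub_eq_zero.1 h2

end BalTensor

lemma tensorExtInt {M N : Type u} [AddCommGroup M] [AddCommGroup N]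
    {f g : TensorProduct ℤ M N →ₗ[ℤ] TensorProduct ℤ M N}
    (h : ∀ m n, f (m ⊗ₜ n) = g (m ⊗ₜ n)) : f = g := by
  refine LinearMap.ext fun y => ?_
  induction y using TensorProduct.induction_on with
  | zero => rw [map_zero, map_zero]
  | tmul m n => exact h m n
  | add x y hx hy => rw [map_add, map_add, hx, hy]

section LeftAction

variable (B : Type u) [Ring B] (M : Type u) [AddCommGroup M] [Module Bᵐᵒᵖ M]
  (N : Type u) [AddCommGroup N] [Module B N]
  (A : Type u) [Ring A] [Module A M] [SMulCommClass A Bᵐᵒᵖ M]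

/-- The left action of `a : A` on the plain tensor product. -/
def lActAux (a : A) : TensorProduct ℤ M N →ₗ[ℤ] TensorProduct ℤ M N :=
  LinearMap.rTensor N (DistribMulAction.toAddMonoidHom M a).toIntLinearMap

lemma lActAux_tmul (a : A) (m : M) (n : N) :
    lActAux M N A a (m ⊗ₜ n) = (a • m) ⊗ₜ n := by
  first
  | exact LinearMap.rTensor_tmul _ _ _ _
  | exact LinearMap.rTensor_tmul _ _ _
  | rfl

lemma lActAux_rel (a : A) :
    balRel B M N ≤ (balRel B M N).comap (lActAux M N A a) := by
  rw [balRel, Submodule.span_le]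
  rintro z ⟨b, m, n, rfl⟩
  simp only [SetLike.mem_coe, Submodule.mem_comap, map_sub, lActAux_tmul]
  rw [smul_comm a (op b) m]
  exact Submodule.subset_span ⟨b, a • m, n, rfl⟩

/-- The left action of `A` on the balanced tensor product. -/
def lAct (a : A) : BalTensor B M N →ₗ[ℤ] BalTensor B M N :=
  Submodule.mapQ _ _ (lActAux M N A a) (lActAux_rel B M N A a)

instance : SMul A (BalTensor B M N) := ⟨fun a x => lAct B M N A a x⟩

lemma BalTensor.lsmul_mk (a : A) (x : TensorProduct ℤ M N) :
    a • (BalTensor.mk B M N x) = BalTensor.mk B M N (lActAux M N A a x) := rfl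

lemma BalTensor.lsmul_tmul (a : A) (m : M) (n : N) :
    a • (BalTensor.tmul B M N m n) = BalTensor.tmul B M N (a • m) n := by
  rw [BalTensor.tmul, BalTensor.lsmul_mk, lActAux_tmul]
  rfl

instance BalTensor.instLeftModule : Module A (BalTensor B M N) where
  one_smul x := by
    obtain ⟨y, rfl⟩ := BalTensor.mk_surjective B M N x
    rw [BalTensor.lsmul_mk]
    congr 1
    have h : lActAux M N A (1 : A) = LinearMap.id :=
      tensorExtInt fun m n => by rw [lActAux_tmul, one_smul]; rfl
    rw [h]; rfl
  mul_smul a b x := by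
    obtain ⟨y, rfl⟩ := BalTensor.mk_surjective B M N x
    rw [BalTensor.lsmul_mk, BalTensor.lsmul_mk, BalTensor.lsmul_mk]
    congr 1
    have h : lActAux M N A (a * b) = (lActAux M N A a).comp (lActAux M N A b) :=
      tensorExtInt fun m n => by
        simp only [LinearMap.comp_apply, lActAux_tmul, mul_smul]
    rw [h]; rfl
  smul_zero a := map_zero (lAct B M N A a)
  smul_add a x y := map_add (lAct B M N A a) x y
  add_smul a b x := by
    obtain ⟨y, rfl⟩ := BalTensor.mk_surjective B M N x
    rw [BalTensor.lsmul_mk, BalTensor.lsmul_mk, BalTensor.lsmul_mk, ← map_add]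
    congr 1
    have h : lActAux M N A (a + b) = lActAux M N A a + lActAux M N A b :=
      tensorExtInt fun m n => by
        simp only [LinearMap.add_apply, lActAux_tmul, add_smul, TensorProduct.add_tmul]
    rw [h]; rfl
  zero_smul x := by
    obtain ⟨y, rfl⟩ := BalTensor.mk_surjective B M N x
    rw [BalTensor.lsmul_mk]
    have h : lActAux M N A (0 : A) = 0 :=
      tensorExtInt fun m n => by
        simp only [lActAux_tmul, zero_smul, TensorProduct.zero_tmul, LinearMap.zero_apply]
    rw [h]
    simp

end LeftAction

section RightAction

variable (B : Type u) [Ring B] (M : Type u) [AddCommGroup M] [Module Bᵐᵒᵖ M]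
  (N : Type u) [AddCommGroup N] [Module B N]
  (C : Type u) [Ring C] [Module Cᵐᵒᵖ N] [SMulCommClass B Cᵐᵒᵖ N]

/-- The right action of `c : Cᵐᵒᵖ` on the plain tensor product. -/
def rActAux (c : Cᵐᵒᵖ) : TensorProduct ℤ M N →ₗ[ℤ] TensorProduct ℤ M N :=
  LinearMap.lTensor M (DistribMulAction.toAddMonoidHom N c).toIntLinearMap

lemma rActAux_tmul (c : Cᵐᵒᵖ) (m : M) (n : N) :
    rActAux M N C c (m ⊗ₜ n) = m ⊗ₜ (c • n) := by
  first
  | exact LinearMap.lTensor_tmul _ _ _ _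
  | exact LinearMap.lTensor_tmul _ _ _
  | rfl

lemma rActAux_rel (c : Cᵐᵒᵖ) :
    balRel B M N ≤ (balRel B M N).comap (rActAux M N C c) := by
  rw [balRel, Submodule.span_le]
  rintro z ⟨b, m, n, rfl⟩
  simp only [SetLike.mem_coe, Submodule.mem_comap, map_sub, rActAux_tmul]
  rw [← smul_comm b c n]
  exact Submodule.subset_span ⟨b, m, c • n, rfl⟩

/-- The right action of `Cᵐᵒᵖ` on the balanced tensor product. -/
def rAct (c : Cᵐᵒᵖ) : BalTensor B M N →ₗ[ℤ] BalTensor B M N :=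
  Submodule.mapQ _ _ (rActAux M N C c) (rActAux_rel B M N C c)

instance : SMul Cᵐᵒᵖ (BalTensor B M N) := ⟨fun c x => rAct B M N C c x⟩

lemma BalTensor.rsmul_mk (c : Cᵐᵒᵖ) (x : TensorProduct ℤ M N) :
    c • (BalTensor.mk B M N x) = BalTensor.mk B M N (rActAux M N C c x) := rfl

lemma BalTensor.rsmul_tmul (c : Cᵐᵒᵖ) (m : M) (n : N) :
    c • (BalTensor.tmul B M N m n) = BalTensor.tmul B M N m (c • n) := by
  rw [BalTensor.tmul, BalTensor.rsmul_mk, rActAux_tmul]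
  rfl

instance BalTensor.instRightModule : Module Cᵐᵒᵖ (BalTensor B M N) where
  one_smul x := by
    obtain ⟨y, rfl⟩ := BalTensor.mk_surjective B M N x
    rw [BalTensor.rsmul_mk]
    congr 1
    have h : rActAux M N C (1 : Cᵐᵒᵖ) = LinearMap.id :=
      tensorExtInt fun m n => by rw [rActAux_tmul, one_smul]; rfl
    rw [h]; rfl
  mul_smul a b x := by
    obtain ⟨y, rfl⟩ := BalTensor.mk_surjective B M N x
    rw [BalTensor.rsmul_mk, BalTensor.rsmul_mk, BalTensor.rsmul_mk]
    congr 1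
    have h : rActAux M N C (a * b) = (rActAux M N C a).comp (rActAux M N C b) :=
      tensorExtInt fun m n => by
        simp only [LinearMap.comp_apply, rActAux_tmul, mul_smul]
    rw [h]; rfl
  smul_zero c := map_zero (rAct B M N C c)
  smul_add c x y := map_add (rAct B M N C c) x y
  add_smul a b x := by
    obtain ⟨y, rfl⟩ := BalTensor.mk_surjective B M N x
    rw [BalTensor.rsmul_mk, BalTensor.rsmul_mk, BalTensor.rsmul_mk, ← map_add]
    congr 1
    have h : rActAux M N C (a + b) = rActAux M N C a + rActAux M N C b :=
      tensorExtInt fun m n => by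
        simp only [LinearMap.add_apply, rActAux_tmul, add_smul, TensorProduct.tmul_add]
    rw [h]; rfl
  zero_smul x := by
    obtain ⟨y, rfl⟩ := BalTensor.mk_surjective B M N x
    rw [BalTensor.rsmul_mk]
    have h : rActAux M N C (0 : Cᵐᵒᵖ) = 0 :=
      tensorExtInt fun m n => by
        simp only [rActAux_tmul, zero_smul, TensorProduct.tmul_zero, LinearMap.zero_apply]
    rw [h]
    simp

end RightAction

section Comm

variable (B : Type u) [Ring B] (M : Type u) [AddCommGroup M] [Module Bᵐᵒᵖ M]
  (N : Type u) [AddCommGroup N] [Module B N]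
  (A : Type u) [Ring A] [Module A M] [SMulCommClass A Bᵐᵒᵖ M]
  (C : Type u) [Ring C] [Module Cᵐᵒᵖ N] [SMulCommClass B Cᵐᵒᵖ N]

instance BalTensor.instSMulCommClass : SMulCommClass A Cᵐᵒᵖ (BalTensor B M N) := by
  constructor
  intro a c x
  obtain ⟨y, rfl⟩ := BalTensor.mk_surjective B M N x
  rw [BalTensor.rsmul_mk, BalTensor.lsmul_mk, BalTensor.lsmul_mk, BalTensor.rsmul_mk]
  congr 1
  have h : (lActAux M N A a).comp (rActAux M N C c)
      = (rActAux M N C c).comp (lActAux M N A a) :=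
    tensorExtInt fun m n => by
      simp only [LinearMap.comp_apply, lActAux_tmul, rActAux_tmul]
  exact DFunLike.congr_fun h y

end Comm

section BimodHom

variable (A : Type u) [Ring A] (C : Type u) [Ring C]
variable (X : Type u) [AddCommGroup X] [Module A X] [Module Cᵐᵒᵖ X]
variable (Y : Type u) [AddCommGroup Y] [Module A Y] [Module Cᵐᵒᵖ Y]

/-- A map of `(A,C)`-bimodules: additive, left `A`-equivariant and right `C`-equivariant. -/
structure IsBimodHom (f : X → Y) : Prop where
  map_add : ∀ x y, f (x + y) = f x + f y
  map_lsmul : ∀ (a : A) (x : X), f (a • x) = a • f x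
  map_rsmul : ∀ (c : Cᵐᵒᵖ) (x : X), f (c • x) = c • f x

/-- `X` is (isomorphic to) a direct summand of `Y` as an `(A,C)`-bimodule,
i.e. a retract of `Y`. -/
def IsBimodSummand : Prop :=
  ∃ (i : X → Y) (p : Y → X), IsBimodHom A C X Y i ∧ IsBimodHom A C Y X p ∧ ∀ x, p (i x) = x

end BimodHom

section Jorder

variable (k : Type u) [Field k]

/-- A finite-dimensional `(A,B)`-bimodule over `k`, whose two induced `k`-actions agree
with the given one. -/
structure BimodData (A B : Type u) [Ring A] [Ring B] [Algebra k A] [Algebra k B] :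
    Type (u + 1) where
  X : Type u
  [acg : AddCommGroup X]
  [modk : Module k X]
  [modl : Module A X]
  [modr : Module Bᵐᵒᵖ X]
  [scc : SMulCommClass A Bᵐᵒᵖ X]
  [tl : IsScalarTower k A X]
  [tr : IsScalarTower k Bᵐᵒᵖ X]
  [fd : FiniteDimensional k X]

attribute [instance] BimodData.acg BimodData.modk BimodData.modl BimodData.modr BimodData.scc
  BimodData.tl BimodData.tr BimodData.fd

variable (A B : Type u) [Ring A] [Ring B] [Algebra k A] [Algebra k B]

/-- `A ≥_J B`: there are finite-dimensional bimodules `M`, `N` such that the regular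
`A`-`A`-bimodule `A` is a direct summand of `M ⊗_B N`. -/
def Jge : Prop :=
  ∃ (M : BimodData k A B) (N : BimodData k B A),
    IsBimodSummand A A A (BalTensor B M.X N.X)

/-- `A ≤_J B`. -/
def Jle : Prop := Jge k B A

/-- `A ∼_J B`: two-sided equivalence. -/
def Jequiv : Prop := Jge k A B ∧ Jge k B A

/-- `A >_J B`: strict two-sided inequality. -/
def Jgt : Prop := Jge k A B ∧ ¬ Jge k B A

end Jorder


section Endolength

/-- The length of a module, defined as the supremum of the lengths of chains of submodules
(the Krull dimension of the submodule lattice). -/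
noncomputable def moduleLength (R X : Type u) [Ring R] [AddCommGroup X] [Module R X] :
    WithBot ℕ∞ :=
  Order.krullDim (Submodule R X)

/-- The endolength of a module: its length as a module over its endomorphism ring. -/
noncomputable def endolength (R X : Type u) [Ring R] [AddCommGroup X] [Module R X] :
    WithBot ℕ∞ :=
  moduleLength (Module.End R X) X

end Endolength

lemma Module.length_end_le_of_smulCommClass (S R X : Type u) [Ring S] [Ring R] [AddCommGroup X]
    [Module S X] [Module R X] [SMulCommClass S R X] :
    Module.length (Module.End R X) X ≤ Module.length S X := by
  rw [← WithBot.coe_le_coe, Module.coe_length, Module.coe_length]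
  refine Order.krullDim_le_of_strictMono
    (fun p => { p.toAddSubmonoid with
      smul_mem' := fun s _ hx => p.smul_mem (DistribSMul.toLinearMap R X s) hx }) ?_
  exact fun _ _ h => h

namespace BalTensor

variable {A X M : Type u} [Ring A] [AddCommGroup X] [Module Aᵐᵒᵖ X] [AddCommGroup M] [Module A M]

lemma tmul_add_left (x y : X) (m : M) :
    tmul A X M (x + y) m = tmul A X M x m + tmul A X M y m := by
  simp [tmul, TensorProduct.add_tmul]

lemma tmul_sum_right {ι : Type*} (s : Finset ι) (x : X) (m : ι → M) :
    tmul A X M x (∑ i ∈ s, m i) = ∑ i ∈ s, tmul A X M x (m i) := by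
  simp [tmul, TensorProduct.tmul_sum]

variable (S : Type u) [Ring S] [Module S X] [SMulCommClass S Aᵐᵒᵖ X]

def tmulLeft (m : M) : X →ₗ[S] BalTensor A X M where
  toFun x := tmul A X M x m
  map_add' x y := tmul_add_left x y m
  map_smul' s x := (lsmul_tmul A X M S s x m).symm

def sumTmul {ι : Type*} [Fintype ι] [DecidableEq ι] (f : (ι → A) →ₗ[A] M) :
    (ι → X) →ₗ[S] BalTensor A X M :=
  ∑ i, (tmulLeft S (f (Pi.single i 1))).comp (LinearMap.proj i)

lemma sumTmul_apply {ι : Type*} [Fintype ι] [DecidableEq ι] (f : (ι → A) →ₗ[A] M)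
    (v : ι → X) : sumTmul S f v = ∑ i, tmul A X M (v i) (f (Pi.single i 1)) := by
  simp [sumTmul, tmulLeft]

lemma sumTmul_surjective {ι : Type*} [Fintype ι] [DecidableEq ι] {f : (ι → A) →ₗ[A] M}
    (hf : Function.Surjective f) : Function.Surjective (sumTmul (X := X) S f) := by
  intro t
  obtain ⟨y, rfl⟩ := mk_surjective A X M t
  induction y using TensorProduct.induction_on with
  | zero => exact ⟨0, map_zero _⟩
  | add y z hy hz =>
    obtain ⟨v, hv⟩ := hy
    obtain ⟨w, hw⟩ := hz
    exact ⟨v + w, by rw [map_add, hv, hw, map_add]⟩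
  | tmul x m =>
    obtain ⟨a, rfl⟩ := hf m
    -- `x ⊗ f a = ∑ x ⊗ f (aᵢ eᵢ) = ∑ x aᵢ ⊗ f eᵢ`
    have hcoord (i : ι) : tmul A X M (op (a i) • x) (f (Pi.single i 1))
        = tmul A X M x (f (Pi.single i (a i))) := by
      rw [balance, ← map_smul, ← Pi.single_smul, smul_eq_mul, mul_one]
    refine ⟨fun i => op (a i) • x, ?_⟩
    rw [sumTmul_apply, Finset.sum_congr rfl fun i _ => hcoord i, ← tmul_sum_right, ← map_sum,
      Finset.univ_sum_single]
    rfl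

end BalTensor

lemma length_end_balTensor_le {A B X M : Type u} [Ring A] [Ring B] [AddCommGroup X]
    [Module Aᵐᵒᵖ X] [AddCommGroup M] [Module A M] [Module Bᵐᵒᵖ M] [SMulCommClass A Bᵐᵒᵖ M]
    {ι : Type*} [Fintype ι] [DecidableEq ι] {f : (ι → A) →ₗ[A] M}
    (hf : Function.Surjective f) :
    Module.length (Module.End Bᵐᵒᵖ (BalTensor A X M)) (BalTensor A X M) ≤
      Fintype.card ι * Module.length (Module.End Aᵐᵒᵖ X) X := by
  calc Module.length (Module.End Bᵐᵒᵖ (BalTensor A X M)) (BalTensor A X M)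
      ≤ Module.length (Module.End Aᵐᵒᵖ X) (BalTensor A X M) :=
        Module.length_end_le_of_smulCommClass _ _ _
    _ ≤ Module.length (Module.End Aᵐᵒᵖ X) (ι → X) :=
        Module.length_le_of_surjective _ (BalTensor.sumTmul_surjective _ hf)
    _ = Fintype.card ι * Module.length (Module.End Aᵐᵒᵖ X) X := by simp

lemma endolength_eq_coe_length (R X : Type u) [Ring R] [AddCommGroup X] [Module R X] :
    endolength R X = Module.length (Module.End R X) X :=
  (Module.coe_length _ _).symm

theorem stmt9_general (A B M X : Type u) [Ring A] [Ring B]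
    [AddCommGroup M] [Module A M] [Module Bᵐᵒᵖ M] [SMulCommClass A Bᵐᵒᵖ M]
    [AddCommGroup X] [Module Aᵐᵒᵖ X]
    (n : ℕ) (f : (Fin n → A) →ₗ[A] M) (hf : Function.Surjective f)
    (hX : endolength Aᵐᵒᵖ X ≠ ⊤) :
    endolength Bᵐᵒᵖ (BalTensor A X M) ≠ ⊤ ∧
    endolength Bᵐᵒᵖ (BalTensor A X M) ≤ (n : WithBot ℕ∞) * endolength Aᵐᵒᵖ X := by
  rw [endolength_eq_coe_length, ne_eq, WithBot.coe_eq_top] at hX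
  have hle := length_end_balTensor_le (X := X) (B := B) hf
  rw [Fintype.card_fin] at hle
  rw [endolength_eq_coe_length, endolength_eq_coe_length, ne_eq, WithBot.coe_eq_top]
  refine ⟨ne_top_of_le_ne_top (WithTop.mul_ne_top (ENat.natCast_ne_top n) hX) hle, ?_⟩
  exact_mod_cast hle

/-- Let `M` be an `A`-`B`-bimodule which is a quotient of `A^{⊕n}` as a left
`A`-module. If `X` is a right `A`-module of finite endolength, then the right `B`-module
`X ⊗_A M` has finite endolength, at most `n` times the endolength of `X`. -/
theorem stmt9 (k A B M X : Type u) [Field k]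
    [Ring A] [Algebra k A] [FiniteDimensional k A]
    [Ring B] [Algebra k B] [FiniteDimensional k B]
    [AddCommGroup M] [Module k M] [Module A M] [Module Bᵐᵒᵖ M]
    [SMulCommClass A Bᵐᵒᵖ M] [IsScalarTower k A M] [IsScalarTower k Bᵐᵒᵖ M]
    [FiniteDimensional k M]
    [AddCommGroup X] [Module Aᵐᵒᵖ X]
    (n : ℕ) (f : (Fin n → A) →ₗ[A] M) (hf : Function.Surjective f)
    (hX : endolength Aᵐᵒᵖ X ≠ ⊤) :
    endolength Bᵐᵒᵖ (BalTensor A X M) ≠ ⊤ ∧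
    endolength Bᵐᵒᵖ (BalTensor A X M) ≤ (n : WithBot ℕ∞) * endolength Aᵐᵒᵖ X :=
  stmt9_general A B M X n f hf hX

end

end JJ
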